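/- For t > 0 let Ẽ_t = {(a,b,c) ∈ ℝ³ : t²(a² + b²) + 3(2c − ab)² ≤ t⁴}. Then: (i) for every t ∈ (0, 1/2) and every h ∈ ℤ³ with h ≠ (0,0,0), the sets Ẽ_t and h·Ẽ_t = {h·g : g ∈ Ẽ_t} are disjoint (the product taken in the Heisenberg group); (ii) for t = 1/2 there exists h ∈ ℤ³, h ≠ (0,0,0), with Ẽ_t ∩ h·Ẽ_t ≠ ∅. Hence sup{t > 0 : Ẽ_t ∩ h·Ẽ_t = ∅ for all h ∈ ℤ³ \ {0}} = 1/2. -/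
import Mathlib

open Real

/-- The Heisenberg group product in `(a,b,c)`-coordinates. -/
def heisMul (g₁ g₂ : ℝ × ℝ × ℝ) : ℝ × ℝ × ℝ :=
  (g₁.1 + g₂.1, g₁.2.1 + g₂.2.1, g₁.2.2 + g₂.2.2 + g₁.1 * g₂.2.1)

/-- Embedding of the discrete Heisenberg group `ℤ³` into the real Heisenberg group. -/
def intCast3 (h : ℤ × ℤ × ℤ) : ℝ × ℝ × ℝ := ((h.1 : ℝ), (h.2.1 : ℝ), (h.2.2 : ℝ))

/-- The dilated ellipsoid `Ẽ_t = δ_t(E₂)` in `(a,b,c)`-coordinates. -/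
def Etilde (t : ℝ) : Set (ℝ × ℝ × ℝ) :=
  {g | t ^ 2 * (g.1 ^ 2 + g.2.1 ^ 2) + 3 * (2 * g.2.2 - g.1 * g.2.1) ^ 2 ≤ t ^ 4}

lemma int_zero_of_real_sq_lt_one (m : ℤ) (h : (m : ℝ) ^ 2 < 1) : m = 0 := by
  have h2 : (-1 : ℝ) < (m : ℝ) := by nlinarith [sq_nonneg ((m : ℝ) + 1)]
  have h3 : (m : ℝ) < 1 := by nlinarith [sq_nonneg ((m : ℝ) - 1)]
  have h4 : -1 < m := by exact_mod_cast h2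
  have h5 : m < 1 := by exact_mod_cast h3
  omega

set_option maxHeartbeats 1000000 in
lemma disj_small (t : ℝ) (ht : 0 < t) (ht2 : t < 1 / 2) (h : ℤ × ℤ × ℤ)
    (hne : h ≠ (0, 0, 0)) :
    Disjoint (Etilde t) (heisMul (intCast3 h) '' Etilde t) := by
  obtain ⟨m, n, k⟩ := h
  rw [Set.disjoint_left]
  rintro ⟨a, b, c⟩ hg ⟨⟨a', b', c'⟩, hg', heq⟩
  simp only [heisMul, intCast3, Prod.mk.injEq] at heq
  obtain ⟨e1, e2, e3⟩ := heq
  simp only [Etilde, Set.mem_setOf_eq] at hg hg'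
  have ht4 : (0:ℝ) < t ^ 2 := by positivity
  have ha : a ^ 2 ≤ t ^ 2 := by nlinarith [sq_nonneg b, sq_nonneg (2 * c - a * b)]
  have hb : b ^ 2 ≤ t ^ 2 := by nlinarith [sq_nonneg a, sq_nonneg (2 * c - a * b)]
  have ha' : a' ^ 2 ≤ t ^ 2 := by nlinarith [sq_nonneg b', sq_nonneg (2 * c' - a' * b')]
  have hb' : b' ^ 2 ≤ t ^ 2 := by nlinarith [sq_nonneg a', sq_nonneg (2 * c' - a' * b')]
  have hm : m = 0 := by
    apply int_zero_of_real_sq_lt_one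
    have : (m : ℝ) = a - a' := by linarith
    rw [this]
    nlinarith [sq_nonneg (a + a')]
  have hn : n = 0 := by
    apply int_zero_of_real_sq_lt_one
    have : (n : ℝ) = b - b' := by linarith
    rw [this]
    nlinarith [sq_nonneg (b + b')]
  have hmr : (m : ℝ) = 0 := by exact_mod_cast hm
  have hc : (2 * c - a * b) ^ 2 ≤ t ^ 4 := by nlinarith
  have hc' : (2 * c' - a' * b') ^ 2 ≤ t ^ 4 := by nlinarith
  have haa : a = a' := by rw [hmr] at e1; linarith
  have hbb : b = b' := by
    have : (n : ℝ) = 0 := by exact_mod_cast hn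
    rw [this] at e2; linarith
  have hk : k = 0 := by
    apply int_zero_of_real_sq_lt_one
    have hkr : (k : ℝ) = c - c' := by rw [hmr] at e3; linarith
    have h14 : t ^ 2 < 1 / 4 := by nlinarith
    have ht16 : t ^ 4 < 1 / 16 := by nlinarith
    rw [hkr]
    have : (c - c') = ((2 * c - a * b) - (2 * c' - a' * b')) / 2 := by
      rw [haa, hbb]; ring
    rw [this]
    nlinarith [sq_nonneg ((2 * c - a * b) + (2 * c' - a' * b'))]
  exact hne (by simp [hm, hn, hk])

lemma not_disj_big (t : ℝ) (ht : 1 / 2 ≤ t) :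
    ((Etilde t) ∩ (heisMul (intCast3 (1, 0, 0)) '' Etilde t)).Nonempty := by
  have h2 : (1:ℝ) / 4 ≤ t ^ 2 := by nlinarith
  have h3 : (0:ℝ) ≤ t ^ 2 * (t ^ 2 - 1 / 4) := mul_nonneg (sq_nonneg t) (by linarith)
  refine ⟨(1 / 2, 0, 0), ?_, ⟨(-(1 / 2), 0, 0), ?_, ?_⟩⟩
  · simp only [Etilde, Set.mem_setOf_eq]; nlinarith
  · simp only [Etilde, Set.mem_setOf_eq]; nlinarith
  · simp [heisMul, intCast3]; norm_num

theorem stmt16 :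
    (∀ t : ℝ, 0 < t → t < 1 / 2 → ∀ h : ℤ × ℤ × ℤ, h ≠ (0, 0, 0) →
      Disjoint (Etilde t) (heisMul (intCast3 h) '' Etilde t)) ∧
    (∃ h : ℤ × ℤ × ℤ, h ≠ (0, 0, 0) ∧
      (Etilde (1 / 2) ∩ heisMul (intCast3 h) '' Etilde (1 / 2)).Nonempty) ∧
    sSup {t : ℝ | 0 < t ∧ ∀ h : ℤ × ℤ × ℤ, h ≠ (0, 0, 0) →
      Disjoint (Etilde t) (heisMul (intCast3 h) '' Etilde t)} = 1 / 2 := by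
  refine ⟨fun t ht ht2 h hne => disj_small t ht ht2 h hne,
    ⟨(1, 0, 0), by simp, not_disj_big (1 / 2) le_rfl⟩, ?_⟩
  have hset : {t : ℝ | 0 < t ∧ ∀ h : ℤ × ℤ × ℤ, h ≠ (0, 0, 0) →
      Disjoint (Etilde t) (heisMul (intCast3 h) '' Etilde t)} = Set.Ioo 0 (1 / 2) := by
    ext t
    simp only [Set.mem_setOf_eq, Set.mem_Ioo]
    constructor
    · rintro ⟨ht, hd⟩
      refine ⟨ht, ?_⟩
      by_contra hle
      push_neg at hle
      obtain ⟨x, hx1, hx2⟩ := not_disj_big t hle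
      exact Set.disjoint_left.mp (hd (1, 0, 0) (by simp)) hx1 hx2
    · rintro ⟨ht, ht2⟩
      exact ⟨ht, fun h hne => disj_small t ht ht2 h hne⟩
  rw [hset]
  exact csSup_Ioo (by norm_num)
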